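/- Let $\alpha > 0$ and let $m \geq 0$, $j \geq 0$ be integers. The type I exceptional Laguerre polynomial $\hat{L}^{I,\alpha}_{m,m+j}$ has at least $j$ distinct zeros in the open interval $(0,\infty)$ and at least $m$ distinct zeros in $(-\infty, 0)$. -/

import Mathlib

/-!
The zeros `0 < z₀ < ⋯ < z_{j-1}` of `L^α_j` interlace with those of `L^α_{j-1}`, in the form
`0 < (-1)^i L^α_{j-1}(z_i)`; this follows by induction on the degree from the three-term
recurrence, the intermediate value theorem and the factorisation of `L^α_n` over its `n` zeros.
At `z_i` the exceptional polynomial reduces to `-L^α_{m-1}(-z_i) L^α_{j-1}(z_i)`, of sign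
`(-1)^(i+1)` because `L^α_{m-1}` is positive on `(-∞, 0]`, while its value at `0` is positive
for `α > 0`. Hence it changes sign on each of the `j` intervals `(0, z₀), (z₀, z₁), …`.
The negative zeros come from the symmetry `XLagI α m j (-x) = XLagI α j m x`.
-/

noncomputable def gbinom (x : ℝ) (k : ℕ) : ℝ :=
  (∏ i ∈ Finset.range k, (x - i)) / (Nat.factorial k)

noncomputable def poch (x : ℝ) (k : ℕ) : ℝ := ∏ i ∈ Finset.range k, (x + i)

/-- Classical (associated) Laguerre polynomial `L^α_n(x)`, with `L^α_n = 0` for `n < 0`. -/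
noncomputable def lag (α : ℝ) (n : ℤ) (x : ℝ) : ℝ :=
  if n < 0 then 0 else
    ∑ k ∈ Finset.range (n.toNat + 1),
      (-1 : ℝ) ^ k * gbinom ((n : ℝ) + α) (n.toNat - k) * x ^ k / (Nat.factorial k)

/-- Type I exceptional `X_m`-Laguerre polynomial of degree `m + j`. -/
noncomputable def XLagI (α : ℝ) (m j : ℤ) (x : ℝ) : ℝ :=
  lag α m (-x) * lag α j x - lag α (m - 1) (-x) * lag α (j - 1) x

open Polynomial Filter Set
open scoped Nat

theorem Fin.strictMono_snoc {α : Type*} [Preorder α] {n : ℕ} {f : Fin n → α} {a : α} :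
    StrictMono (Fin.snoc f a : Fin (n + 1) → α) ↔ StrictMono f ∧ ∀ i, f i < a := by
  rw [← Fin.insertNth_last', Fin.strictMono_insertNth_iff]
  simp [Fin.castSucc_lt_last, not_le.2 (Fin.castSucc_lt_last _)]

theorem exists_mem_Ioo_eq_zero_of_neg_one_pow {f : ℝ → ℝ} {a b : ℝ}
    (hf : ContinuousOn f (Icc a b)) (hab : a < b) (i : ℕ) (ha : 0 < (-1) ^ i * f a)
    (hb : 0 < (-1) ^ (i + 1) * f b) :
    ∃ c ∈ Ioo a b, f c = 0 := by
  rcases neg_one_pow_eq_or ℝ i with h | h <;> simp only [pow_succ, h] at ha hb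
  · exact intermediate_value_Ioo' hab.le hf ⟨by linarith, by linarith⟩
  · exact intermediate_value_Ioo hab.le hf ⟨by linarith, by linarith⟩

theorem exists_zeros_of_alternating_signs {f : ℝ → ℝ} (hf : Continuous f) {k : ℕ}
    {t : Fin (k + 1) → ℝ} (ht : StrictMono t)
    (hsign : ∀ i : Fin (k + 1), 0 < (-1) ^ (i : ℕ) * f (t i)) :
    ∃ w : Fin k → ℝ, StrictMono w ∧ ∀ i, w i ∈ Ioo (t i.castSucc) (t i.succ) ∧ f (w i) = 0 := by
  choose w hw using fun i : Fin k ↦ exists_mem_Ioo_eq_zero_of_neg_one_pow hf.continuousOn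
    (ht i.castSucc_lt_succ) (i : ℕ) (by simpa using hsign i.castSucc) (by simpa using hsign i.succ)
  refine ⟨w, fun i j hij ↦ ?_, hw⟩
  calc w i < t i.succ := (hw i).1.2
    _ ≤ t j.castSucc := ht.monotone (Fin.succ_le_castSucc_iff.2 hij)
    _ < w j := (hw j).1.1

theorem neg_one_pow_mul_prod_sub_pos {n k : ℕ} (hk : k ≤ n) {z : Fin n → ℝ} {x : ℝ}
    (hlt : ∀ i : Fin n, (i : ℕ) < k → z i < x) (hgt : ∀ i : Fin n, k ≤ i → x < z i) :
    0 < (-1) ^ k * ∏ i, (z i - x) := by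
  induction n generalizing k with
  | zero => simp [Nat.le_zero.1 hk]
  | succ n ih =>
    rw [Fin.prod_univ_succ]
    cases k with
    | zero =>
      have htail := ih (Nat.zero_le n) (z := fun i ↦ z i.succ)
        (fun i hi ↦ absurd hi (Nat.not_lt_zero _))
        (fun i _ ↦ hgt i.succ (Nat.zero_le _))
      have hz0 := hgt 0 le_rfl
      simp only [pow_zero, one_mul] at htail ⊢
      exact mul_pos (by linarith) htail
    | succ k =>
      have hz0 := hlt 0 (Nat.succ_pos k)
      have htail := ih (Nat.le_of_succ_le_succ hk) (z := fun i ↦ z i.succ)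
        (fun i hi ↦ hlt i.succ (by simpa using hi)) (fun i hi ↦ hgt i.succ (by simpa using hi))
      calc 0 < (x - z 0) * ((-1) ^ k * ∏ i : Fin n, (z i.succ - x)) :=
            mul_pos (by linarith) htail
        _ = _ := by ring

theorem Polynomial.eq_C_leadingCoeff_mul_prod_X_sub_C {R : Type*} [CommRing R] [IsDomain R]
    {p : R[X]} {n : ℕ} {z : Fin n → R} (hz : Function.Injective z) (hroot : ∀ i, p.IsRoot (z i))
    (hdeg : p.natDegree = n) : p = C p.leadingCoeff * ∏ i, (X - C (z i)) := by
  rcases eq_or_ne p 0 with rfl | hp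
  · simp
  have hroots : p.roots = Finset.univ.val.map z := by
    refine (Multiset.eq_of_le_of_card_le ?_ ?_).symm
    · refine (Multiset.le_iff_subset (Finset.univ.nodup.map hz)).2 fun a ha ↦ ?_
      obtain ⟨i, -, rfl⟩ := Multiset.mem_map.1 ha
      exact (mem_roots hp).2 (hroot i)
    · simpa [hdeg] using card_roots' p
  conv_lhs => rw [← C_leadingCoeff_mul_prod_multiset_X_sub_C (p := p) (by simp [hroots, hdeg])]
  rw [hroots, Multiset.map_map]
  rfl

theorem gbinom_zero (x : ℝ) : gbinom x 0 = 1 := by simp [gbinom]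

theorem gbinom_succ (x : ℝ) (k : ℕ) : gbinom x (k + 1) = gbinom x k * (x - k) / (k + 1) := by
  simp only [gbinom, Finset.prod_range_succ, Nat.factorial_succ]
  push_cast
  field_simp

theorem gbinom_add_one_succ (x : ℝ) (k : ℕ) :
    gbinom (x + 1) (k + 1) = (x + 1) / (k + 1) * gbinom x k := by
  simp only [gbinom, Finset.prod_range_succ', Nat.factorial_succ]
  push_cast
  simp only [add_sub_add_right_eq_sub, sub_zero]
  field_simp

theorem gbinom_add_one_succ_eq_add (x : ℝ) (k : ℕ) :
    gbinom (x + 1) (k + 1) = gbinom x k + gbinom x (k + 1) := by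
  rw [gbinom_add_one_succ, gbinom_succ]
  field_simp
  ring

theorem gbinom_pos {x : ℝ} {k : ℕ} (h : (k : ℝ) < x + 1) : 0 < gbinom x k := by
  refine div_pos (Finset.prod_pos fun i hi ↦ ?_) (by positivity)
  have : (i : ℝ) + 1 ≤ k := by exact_mod_cast Finset.mem_range.1 hi
  linarith

noncomputable def laguerreCoeff (α : ℝ) (n k : ℕ) : ℝ := (-1) ^ k * gbinom (n + α) (n - k) / k !

noncomputable def laguerre (α : ℝ) (n : ℕ) : ℝ[X] :=
  ∑ k ∈ Finset.range (n + 1), C (laguerreCoeff α n k) * X ^ k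

section Laguerre

variable (α : ℝ)

theorem lag_natCast (n : ℕ) (x : ℝ) : lag α n x = (laguerre α n).eval x := by
  simp [lag, laguerre, laguerreCoeff, eval_finsetSum, mul_div_right_comm]

theorem lag_neg_one (x : ℝ) : lag α (-1) x = 0 := by simp [lag]

theorem coeff_laguerre (n k : ℕ) :
    (laguerre α n).coeff k = if k ≤ n then laguerreCoeff α n k else 0 := by
  simp [laguerre, coeff_C_mul, coeff_X_pow]

theorem laguerre_zero : laguerre α 0 = 1 := by
  simp [laguerre, laguerreCoeff, gbinom_zero]

theorem natDegree_laguerre (n : ℕ) : (laguerre α n).natDegree = n := by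
  refine natDegree_eq_of_le_of_coeff_ne_zero ?_ ?_
  · exact natDegree_le_iff_coeff_eq_zero.2 fun k hk ↦ by
      rw [coeff_laguerre, if_neg (by exact_mod_cast hk.not_ge)]
  · simp [coeff_laguerre, laguerreCoeff, gbinom_zero, Nat.factorial_ne_zero]

theorem leadingCoeff_laguerre (n : ℕ) : (laguerre α n).leadingCoeff = (-1) ^ n / n ! := by
  simp [leadingCoeff, natDegree_laguerre, coeff_laguerre, laguerreCoeff, gbinom_zero]

-- Coefficientwise form of `x L_{n+1}' = (n + 1) L_{n+1} - (n + 1 + α) L_n`.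
theorem sub_mul_coeff_laguerre_succ (n k : ℕ) :
    ((n : ℝ) + 1 - k) * (laguerre α (n + 1)).coeff k = (n + 1 + α) * (laguerre α n).coeff k := by
  rw [coeff_laguerre, coeff_laguerre]
  rcases lt_trichotomy k (n + 1) with hk | rfl | hk
  · obtain ⟨d, rfl⟩ := Nat.exists_eq_add_of_le (Nat.lt_succ_iff.1 hk)
    rw [if_pos (by omega), if_pos (by omega)]
    simp only [laguerreCoeff, show k + d + 1 - k = d + 1 by omega, show k + d - k = d by omega]
    push_cast
    rw [show (k : ℝ) + d + 1 + α = k + d + α + 1 by ring, gbinom_add_one_succ]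
    field_simp
    ring
  · simp
  · rw [if_neg (by omega), if_neg (by omega)]
    simp

-- Coefficientwise form of `L_{n+1}' - L_n' = -L_n`; together with the previous identity
-- it gives the three-term recurrence.
theorem coeff_laguerre_succ_sub (n k : ℕ) :
    ((k : ℝ) + 1) * ((laguerre α (n + 1)).coeff (k + 1) - (laguerre α n).coeff (k + 1)) =
      -(laguerre α n).coeff k := by
  rw [coeff_laguerre, coeff_laguerre, coeff_laguerre]
  rcases lt_trichotomy k n with hk | rfl | hk
  · obtain ⟨d, rfl⟩ := Nat.exists_eq_add_of_le (Nat.succ_le_of_lt hk)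
    rw [if_pos (by omega), if_pos (by omega), if_pos (by omega)]
    simp only [laguerreCoeff, show k + 1 + d + 1 - (k + 1) = d + 1 by omega,
      show k + 1 + d - (k + 1) = d by omega, show k + 1 + d - k = d + 1 by omega]
    push_cast
    rw [show (k : ℝ) + 1 + d + 1 + α = k + 1 + d + α + 1 by ring, gbinom_add_one_succ_eq_add,
      Nat.factorial_succ]
    push_cast
    field_simp
    ring
  · rw [if_pos le_rfl, if_neg (by omega), if_pos le_rfl]
    simp only [laguerreCoeff, Nat.sub_self, gbinom_zero, Nat.factorial_succ]
    push_cast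
    field_simp
    ring
  · rw [if_neg (by omega), if_neg (by omega), if_neg (by omega)]
    simp

theorem laguerre_recurrence (n : ℕ) :
    C ((n : ℝ) + 2) * laguerre α (n + 2) =
      (C (2 * n + 3 + α) - X) * laguerre α (n + 1) - C (n + 1 + α) * laguerre α n := by
  ext k
  rcases k with _ | k
  · have h₁ := sub_mul_coeff_laguerre_succ α (n + 1) 0
    have h₀ := sub_mul_coeff_laguerre_succ α n 0
    simp only [coeff_C_mul, coeff_sub, sub_mul, coeff_X_mul_zero] at h₁ h₀ ⊢
    push_cast at h₁ h₀ ⊢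
    linear_combination h₁ - h₀
  · have h₁ := sub_mul_coeff_laguerre_succ α (n + 1) (k + 1)
    have h₀ := sub_mul_coeff_laguerre_succ α n (k + 1)
    have hd := coeff_laguerre_succ_sub α (n + 1) k
    simp only [coeff_C_mul, coeff_sub, sub_mul, coeff_X_mul] at h₁ h₀ hd ⊢
    push_cast at h₁ h₀ hd ⊢
    linear_combination h₁ + hd - h₀

theorem eval_zero_laguerre_succ (n : ℕ) :
    (laguerre α (n + 1)).eval 0 = (n + 1 + α) / (n + 1) * (laguerre α n).eval 0 := by
  have h := sub_mul_coeff_laguerre_succ α n 0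
  rw [coeff_zero_eq_eval_zero, coeff_zero_eq_eval_zero, Nat.cast_zero, sub_zero] at h
  field_simp
  linarith

theorem eval_laguerre_succ_succ_of_isRoot {n : ℕ} {x : ℝ} (hx : (laguerre α (n + 1)).IsRoot x) :
    ((n : ℝ) + 2) * (laguerre α (n + 2)).eval x = -((n + 1 + α) * (laguerre α n).eval x) := by
  simpa [hx.eq_zero] using congrArg (eval x) (laguerre_recurrence α n)

theorem eval_laguerre_pos_of_nonpos {α : ℝ} (hα : -1 < α) (n : ℕ) {x : ℝ} (hx : x ≤ 0) :
    0 < (laguerre α n).eval x := by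
  have hterm (k : ℕ) : laguerreCoeff α n k * x ^ k = gbinom (n + α) (n - k) / k ! * (-x) ^ k := by
    rw [laguerreCoeff, neg_pow]
    ring
  have hbinom (k : ℕ) : 0 < gbinom (n + α) (n - k) :=
    gbinom_pos (by
      have : ((n - k : ℕ) : ℝ) ≤ n := by exact_mod_cast Nat.sub_le n k
      linarith)
  simp only [laguerre, eval_finsetSum, eval_mul, eval_C, eval_pow, eval_X, hterm]
  refine Finset.sum_pos'
    (fun k _ ↦ mul_nonneg (div_nonneg (hbinom k).le (by positivity)) (pow_nonneg (by linarith) k))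
    ⟨0, by simp, by simpa using hbinom 0⟩

theorem eventually_neg_one_pow_mul_eval_laguerre_succ_pos (n : ℕ) :
    ∀ᶠ x in atTop, 0 < (-1) ^ (n + 1) * (laguerre α (n + 1)).eval x := by
  set Q := C ((-1 : ℝ) ^ (n + 1)) * laguerre α (n + 1)
  have hdeg : 0 < Q.degree := natDegree_pos_iff_degree_pos.1 <| by
    rw [natDegree_C_mul (by simp), natDegree_laguerre]
    omega
  have hlc : 0 ≤ Q.leadingCoeff := by
    rw [leadingCoeff_mul, leadingCoeff_C, leadingCoeff_laguerre, ← mul_div_assoc, ← mul_pow]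
    norm_num
  filter_upwards [(Q.tendsto_atTop_of_leadingCoeff_nonneg hdeg hlc).eventually_gt_atTop 0]
    with x hx
  simpa [Q] using hx

theorem eval_laguerre_eq_prod {n : ℕ} {z : Fin n → ℝ} (hz : Function.Injective z)
    (hroot : ∀ i, (laguerre α n).IsRoot (z i)) (x : ℝ) :
    (laguerre α n).eval x = (∏ i, (z i - x)) / n ! := by
  rw [eq_C_leadingCoeff_mul_prod_X_sub_C hz hroot (natDegree_laguerre α n), leadingCoeff_laguerre]
  simp only [eval_mul, eval_C, eval_prod, eval_sub, eval_X]
  rw [show ∏ i, (z i - x) = ∏ i, -(x - z i) by simp, Finset.prod_neg, Finset.card_univ,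
    Fintype.card_fin]
  ring

variable {α}

theorem neg_one_pow_mul_eval_laguerre_pos {n k : ℕ} (hk : k ≤ n) {z : Fin n → ℝ}
    (hz : Function.Injective z) (hroot : ∀ i, (laguerre α n).IsRoot (z i)) {x : ℝ}
    (hlt : ∀ i : Fin n, (i : ℕ) < k → z i < x) (hgt : ∀ i : Fin n, k ≤ i → x < z i) :
    0 < (-1) ^ k * (laguerre α n).eval x := by
  rw [eval_laguerre_eq_prod α hz hroot, mul_div_assoc']
  exact div_pos (neg_one_pow_mul_prod_sub_pos hk hlt hgt) (by positivity)

theorem exists_roots_laguerre_succ_of_roots (hα : -1 < α) {n : ℕ} {z : Fin n → ℝ}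
    (hz : StrictMono z) (hpos : ∀ i, 0 < z i) (hroot : ∀ i, (laguerre α n).IsRoot (z i))
    (hsign : ∀ i : Fin n, 0 < (-1) ^ ((i : ℕ) + 1) * (laguerre α (n + 1)).eval (z i)) :
    ∃ w : Fin (n + 1) → ℝ, StrictMono w ∧ (∀ i, 0 < w i) ∧
      (∀ i, (laguerre α (n + 1)).IsRoot (w i)) ∧
      ∀ i : Fin (n + 1), 0 < (-1) ^ (i : ℕ) * (laguerre α n).eval (w i) := by
  obtain ⟨b, hb, hzb, hb0⟩ : ∃ b, 0 < (-1) ^ (n + 1) * (laguerre α (n + 1)).eval b ∧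
      (∀ i, z i < b) ∧ 0 < b :=
    ((eventually_neg_one_pow_mul_eval_laguerre_succ_pos α n).and
      ((eventually_all.2 fun i ↦ eventually_gt_atTop (z i)).and (eventually_gt_atTop 0))).exists
  -- `L_{n+1}` alternates in sign along `0 < z₀ < ⋯ < z_{n-1} < b`.
  set t : Fin (n + 2) → ℝ := Fin.cons 0 (Fin.snoc z b)
  have ht : StrictMono t := by
    refine Fin.strictMono_cons.2 ⟨fun i ↦ ?_, Fin.strictMono_snoc.2 ⟨hz, hzb⟩⟩
    induction i using Fin.lastCases <;> simp [hb0, hpos]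
  have htz (i : Fin n) : t i.castSucc.succ = z i := by simp [t]
  have htsign (i : Fin (n + 2)) : 0 < (-1) ^ (i : ℕ) * (laguerre α (n + 1)).eval (t i) := by
    induction i using Fin.cases with
    | zero => simpa [t] using eval_laguerre_pos_of_nonpos hα (n + 1) le_rfl
    | succ i =>
      induction i using Fin.lastCases with
      | last => simpa [t] using hb
      | cast i => simpa [t] using hsign i
  obtain ⟨w, hw, hwt⟩ :=
    exists_zeros_of_alternating_signs (laguerre α (n + 1)).continuous ht htsign
  refine ⟨w, hw, fun i ↦ ?_, fun i ↦ (hwt i).2, fun i ↦ ?_⟩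
  · calc 0 = t 0 := rfl
      _ ≤ t i.castSucc := ht.monotone (Fin.zero_le _)
      _ < w i := (hwt i).1.1
  · refine neg_one_pow_mul_eval_laguerre_pos (Nat.lt_succ_iff.1 i.isLt) hz.injective hroot
      (fun j hj ↦ ?_) (fun j hj ↦ ?_)
    · calc z j = t j.castSucc.succ := (htz j).symm
        _ ≤ t i.castSucc := ht.monotone (by simpa [Fin.le_def] using hj)
        _ < w i := (hwt i).1.1
    · calc w i < t i.succ := (hwt i).1.2
        _ ≤ t j.castSucc.succ := ht.monotone (by simpa [Fin.le_def] using hj)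
        _ = z j := htz j

theorem exists_roots_laguerre_succ (hα : -1 < α) : ∀ n : ℕ,
    ∃ z : Fin (n + 1) → ℝ, StrictMono z ∧ (∀ i, 0 < z i) ∧
      (∀ i, (laguerre α (n + 1)).IsRoot (z i)) ∧
      ∀ i : Fin (n + 1), 0 < (-1) ^ (i : ℕ) * (laguerre α n).eval (z i)
  | 0 => exists_roots_laguerre_succ_of_roots hα (z := Fin.elim0) (fun i ↦ i.elim0)
      (fun i ↦ i.elim0) (fun i ↦ i.elim0) (fun i ↦ i.elim0)
  | n + 1 => by
    obtain ⟨z, hz, hpos, hroot, hsign⟩ := exists_roots_laguerre_succ hα n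
    refine exists_roots_laguerre_succ_of_roots hα hz hpos hroot fun i ↦ ?_
    have hrec := eval_laguerre_succ_succ_of_isRoot α (hroot i)
    have hcoef : 0 < ((n : ℝ) + 1 + α) / (n + 2) := by
      apply div_pos <;> linarith
    calc 0 < ((n : ℝ) + 1 + α) / (n + 2) * ((-1) ^ (i : ℕ) * (laguerre α n).eval (z i)) :=
          mul_pos hcoef (hsign i)
      _ = (-1) ^ ((i : ℕ) + 1) * (laguerre α (n + 2)).eval (z i) := by
          field_simp
          linear_combination (-1) ^ (i : ℕ) * hrec

end Laguerre

section XLagI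

variable (α : ℝ)

theorem XLagI_neg (m j : ℤ) (x : ℝ) : XLagI α m j (-x) = XLagI α j m x := by
  simp only [XLagI, neg_neg]
  ring

theorem XLagI_zero_left (n : ℕ) (x : ℝ) : XLagI α (0 : ℕ) n x = (laguerre α n).eval x := by
  rw [XLagI, lag_natCast, lag_natCast, laguerre_zero]
  simp [lag_neg_one]

theorem XLagI_succ_succ (m j : ℕ) (x : ℝ) :
    XLagI α (m + 1 : ℕ) (j + 1 : ℕ) x = (laguerre α (m + 1)).eval (-x) *
      (laguerre α (j + 1)).eval x - (laguerre α m).eval (-x) * (laguerre α j).eval x := by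
  simp [XLagI, ← lag_natCast]

variable {α}

theorem XLagI_succ_succ_zero_pos (hα : 0 < α) (m j : ℕ) :
    0 < XLagI α (m + 1 : ℕ) (j + 1 : ℕ) 0 := by
  have hr (n : ℕ) : 1 < ((n : ℝ) + 1 + α) / (n + 1) := by
    rw [one_lt_div (by positivity)]
    linarith
  have hm := eval_laguerre_pos_of_nonpos (by linarith : -1 < α) m le_rfl
  have hj := eval_laguerre_pos_of_nonpos (by linarith : -1 < α) j le_rfl
  rw [XLagI_succ_succ, neg_zero, eval_zero_laguerre_succ, eval_zero_laguerre_succ, sub_pos]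
  calc (laguerre α m).eval 0 * (laguerre α j).eval 0
      < (((m : ℝ) + 1 + α) / (m + 1) * ((j + 1 + α) / (j + 1))) *
        ((laguerre α m).eval 0 * (laguerre α j).eval 0) :=
        lt_mul_of_one_lt_left (mul_pos hm hj) (one_lt_mul_of_lt_of_le (hr m) (hr j).le)
    _ = _ := by ring

theorem exists_pos_roots_XLagI (hα : 0 < α) (m j : ℕ) :
    ∃ S : Finset ℝ, S.card = j ∧ ∀ x ∈ S, 0 < x ∧ XLagI α m j x = 0 := by
  rcases j with _ | j
  · exact ⟨∅, rfl, by simp⟩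
  obtain ⟨z, hz, hzpos, hzroot, hzsign⟩ := exists_roots_laguerre_succ (by linarith : -1 < α) j
  suffices ∃ w : Fin (j + 1) → ℝ, Function.Injective w ∧
      ∀ i, 0 < w i ∧ XLagI α m (j + 1 : ℕ) (w i) = 0 by
    obtain ⟨w, hw, hwx⟩ := this
    exact ⟨Finset.univ.map ⟨w, hw⟩, by simp, by simpa using hwx⟩
  rcases m with _ | m
  · exact ⟨z, hz.injective, fun i ↦ ⟨hzpos i, by rw [XLagI_zero_left]; exact hzroot i⟩⟩
  set t : Fin (j + 2) → ℝ := Fin.cons 0 z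
  have ht : StrictMono t := Fin.strictMono_cons.2 ⟨hzpos, hz⟩
  have htsign (i : Fin (j + 2)) : 0 < (-1) ^ (i : ℕ) * XLagI α (m + 1 : ℕ) (j + 1 : ℕ) (t i) := by
    induction i using Fin.cases with
    | zero => simpa [t] using XLagI_succ_succ_zero_pos hα m j
    | succ i =>
      have hm := eval_laguerre_pos_of_nonpos (by linarith : -1 < α) m (neg_nonpos.2 (hzpos i).le)
      simp only [t, Fin.cons_succ, XLagI_succ_succ, (hzroot i).eq_zero, Fin.val_succ]
      calc 0 < (laguerre α m).eval (-z i) * ((-1) ^ (i : ℕ) * (laguerre α j).eval (z i)) :=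
            mul_pos hm (hzsign i)
        _ = _ := by ring
  have hcont : Continuous (XLagI α (m + 1 : ℕ) (j + 1 : ℕ)) := by
    simp only [funext (XLagI_succ_succ α m j)]
    fun_prop
  obtain ⟨w, hw, hwt⟩ := exists_zeros_of_alternating_signs hcont ht htsign
  refine ⟨w, hw.injective, fun i ↦ ⟨?_, (hwt i).2⟩⟩
  calc 0 = t 0 := rfl
    _ ≤ t i.castSucc := ht.monotone (Fin.zero_le _)
    _ < w i := (hwt i).1.1

end XLagI

/-- The type I exceptional Laguerre polynomial has at least `j` distinct zeros in
`(0, ∞)` and at least `m` distinct zeros in `(-∞, 0)`. -/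
theorem xLaguerreI_zero_count (α : ℝ) (hα : 0 < α) (m j : ℕ) :
    (∃ S : Finset ℝ, S.card = j ∧ ∀ x ∈ S, 0 < x ∧ XLagI α m j x = 0) ∧
    (∃ T : Finset ℝ, T.card = m ∧ ∀ x ∈ T, x < 0 ∧ XLagI α m j x = 0) := by
  refine ⟨exists_pos_roots_XLagI hα m j, ?_⟩
  obtain ⟨S, hcard, hS⟩ := exists_pos_roots_XLagI hα j m
  refine ⟨S.map (Equiv.neg ℝ).toEmbedding, by simpa using hcard, fun x hx ↦ ?_⟩
  obtain ⟨y, hy, rfl⟩ := Finset.mem_map.1 hx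
  simpa [XLagI_neg] using hS y hy
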